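/- arXiv:1108.4292 — 2 statements merged into one kernel-verified Lean document; each statement's English description precedes it below -/
import Mathlib

section
/- Let X be a metric space with dim_H X ≥ 1. Then for every x₀ ∈ X and every ε > 0 there exists r > 0 with dim_H(∂B) ≤ dim_H X − 1 + ε, where ∂B is the boundary of the open ball of radius r around x₀; in fact the set of radii r for which dim_H({x : d(x,x₀) = r}) ≤ dim_H X − 1 + ε fails has Lebesgue measure zero in (0,∞). -/
/-!
The spheres around `x₀` are the fibres of the 1-Lipschitz map `x ↦ dist x x₀`, so the bound is an
instance of Eilenberg's coarea inequality for a `K`-Lipschitz `f : X → ℝ`: if `μH[d + 1] A = 0`, then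
`μH[d] (A ∩ f ⁻¹' {y}) = 0` for almost every `y`. To see this, cover `A` by sets `t n` of small
diameter with `∑ diam (t n) ^ (d + 1)` small, and spread the weight `diam (t n) ^ d` over the
interval `closure (f '' t n)`, whose length is at most `K * diam (t n)`. The total weight has small
integral and dominates, at every `y`, a Hausdorff pre-measure of the fibre over `y`; Fatou's lemma
concludes. Letting `d` decrease to `dimH X - 1` shows that almost every sphere has dimension at most
`dimH X - 1`; the radii in `(0, ∞)` have positive measure, and the boundary of a ball lies in the
sphere.
-/

open Set ENNReal NNReal MeasureTheory

open Filter Topology Metric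

section Coarea

variable {X : Type*} [EMetricSpace X]

noncomputable def fiberCoverSum (f : X → ℝ) (d : ℝ) (t : ℕ → Set X) (y : ℝ) : ℝ≥0∞ :=
  ∑' n, (closure (f '' t n)).indicator (fun _ => ediam (t n) ^ d) y

theorem measurable_fiberCoverSum (f : X → ℝ) (d : ℝ) (t : ℕ → Set X) :
    Measurable (fiberCoverSum f d t) :=
  .tsum fun _ => measurable_const.indicator isClosed_closure.measurableSet

theorem LipschitzWith.lintegral_fiberCoverSum_le {K : ℝ≥0} {f : X → ℝ} (hf : LipschitzWith K f)
    {d : ℝ} (hd : 0 ≤ d) (t : ℕ → Set X) :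
    ∫⁻ y, fiberCoverSum f d t y ≤ K * ∑' n, ediam (t n) ^ (d + 1) := by
  unfold fiberCoverSum
  rw [lintegral_tsum fun n =>
    (measurable_const.indicator isClosed_closure.measurableSet).aemeasurable,
    ← ENNReal.tsum_mul_left]
  refine ENNReal.tsum_le_tsum fun n => ?_
  rw [lintegral_indicator isClosed_closure.measurableSet, setLIntegral_const,
    ENNReal.rpow_add_of_nonneg _ _ hd zero_le_one, ENNReal.rpow_one, mul_left_comm]
  have hvol : volume (closure (f '' t n)) ≤ K * ediam (t n) :=
    (Real.volume_le_diam _).trans ((ediam_closure _).trans_le (hf.ediam_image_le _))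
  gcongr

variable [MeasurableSpace X] [BorelSpace X]

theorem exists_cover_tsum_ediam_rpow_lt {d : ℝ} (hd : 0 < d) {A : Set X} (hA : μH[d] A = 0)
    {r δ : ℝ≥0∞} (hr : 0 < r) (hδ : 0 < δ) :
    ∃ t : ℕ → Set X, A ⊆ ⋃ n, t n ∧ (∀ n, ediam (t n) ≤ r) ∧ ∑' n, ediam (t n) ^ d < δ := by
  rw [Measure.hausdorffMeasure_apply] at hA
  have hinf := ENNReal.iSup_eq_zero.1 (ENNReal.iSup_eq_zero.1 hA r) hr
  obtain ⟨t, hAt, htr, hsum⟩ : ∃ t : ℕ → Set X, A ⊆ ⋃ n, t n ∧ (∀ n, ediam (t n) ≤ r) ∧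
      ∑' n, ⨆ _ : (t n).Nonempty, ediam (t n) ^ d < δ := by
    simpa only [iInf_lt_iff, exists_prop] using hinf.trans_lt hδ
  refine ⟨t, hAt, htr, hsum.trans_eq' (tsum_congr fun n => ?_)⟩
  rcases (t n).eq_empty_or_nonempty with he | hne
  · simp [he, hd]
  · rw [iSup_pos hne]

theorem hausdorffMeasure_inter_preimage_le_liminf_fiberCoverSum (f : X → ℝ) {d : ℝ} (hd : 0 < d)
    {A : Set X} {t : ℕ → ℕ → Set X} {r : ℕ → ℝ≥0∞} (hr : Tendsto r atTop (𝓝 0))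
    (htr : ∀ k n, ediam (t k n) ≤ r k) (hAt : ∀ k, A ⊆ ⋃ n, t k n) (y : ℝ) :
    μH[d] (A ∩ f ⁻¹' {y}) ≤ liminf (fun k => fiberCoverSum f d (t k) y) atTop := by
  refine (Measure.hausdorffMeasure_le_liminf_tsum d _ r hr (fun k n => t k n ∩ f ⁻¹' {y})
    (.of_forall fun k n => (ediam_mono inter_subset_left).trans (htr k n))
    (.of_forall fun k => ?_)).trans
    (liminf_le_liminf (.of_forall fun k => ENNReal.tsum_le_tsum fun n => ?_))
  · rw [← iUnion_inter]
    exact inter_subset_inter_left _ (hAt k)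
  · rcases (t k n ∩ f ⁻¹' {y}).eq_empty_or_nonempty with he | ⟨x, hx, hfx⟩
    · simp [he, hd]
    · rw [indicator_of_mem (subset_closure (show y ∈ f '' t k n from ⟨x, hx, hfx⟩))]
      exact ENNReal.rpow_le_rpow (ediam_mono inter_subset_left) hd.le

theorem LipschitzWith.ae_hausdorffMeasure_inter_preimage_eq_zero {K : ℝ≥0} {f : X → ℝ}
    (hf : LipschitzWith K f) {d : ℝ} (hd : 0 < d) {A : Set X} (hA : μH[d + 1] A = 0) :
    ∀ᵐ y, μH[d] (A ∩ f ⁻¹' {y}) = 0 := by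
  have hpos : ∀ k : ℕ, (0 : ℝ≥0∞) < (k : ℝ≥0∞)⁻¹ := fun k => ENNReal.inv_pos.2 (natCast_ne_top k)
  choose t hAt htr hsum using fun k =>
    exists_cover_tsum_ediam_rpow_lt (by positivity) hA (hpos k) (hpos k)
  have hint : ∀ k, ∫⁻ y, fiberCoverSum f d (t k) y ≤ K * (k : ℝ≥0∞)⁻¹ := fun k =>
    (hf.lintegral_fiberCoverSum_le hd.le (t k)).trans (by gcongr; exact (hsum k).le)
  have hlim : ∫⁻ y, liminf (fun k => fiberCoverSum f d (t k) y) atTop = 0 := by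
    refine nonpos_iff_eq_zero.1 ((lintegral_liminf_le fun k =>
      measurable_fiberCoverSum f d (t k)).trans ?_)
    calc liminf (fun k => ∫⁻ y, fiberCoverSum f d (t k) y) atTop
        ≤ liminf (fun k : ℕ => K * (k : ℝ≥0∞)⁻¹) atTop := liminf_le_liminf (.of_forall hint)
      _ = 0 := by
        simpa using (ENNReal.Tendsto.const_mul ENNReal.tendsto_inv_nat_nhds_zero
          (Or.inr coe_ne_top)).liminf_eq
  filter_upwards [(lintegral_eq_zero_iff (Measurable.liminf fun k =>
    measurable_fiberCoverSum f d (t k))).1 hlim] with y hy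
  exact nonpos_iff_eq_zero.1 ((hausdorffMeasure_inter_preimage_le_liminf_fiberCoverSum f hd
    ENNReal.tendsto_inv_nat_nhds_zero htr hAt y).trans hy.le)

end Coarea

section Dimension

variable {X : Type*} [EMetricSpace X] {K : ℝ≥0} {f : X → ℝ}

theorem LipschitzWith.ae_dimH_inter_preimage_le_of_lt (hf : LipschitzWith K f) {d : ℝ≥0}
    (hd : 0 < d) {A : Set X} (hA : dimH A < d + 1) :
    ∀ᵐ y, dimH (A ∩ f ⁻¹' {y}) ≤ d := by
  borelize X
  have hA' : μH[(d : ℝ) + 1] A = 0 := by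
    simpa using hausdorffMeasure_of_dimH_lt (d := d + 1) (by simpa using hA)
  filter_upwards [hf.ae_hausdorffMeasure_inter_preimage_eq_zero (NNReal.coe_pos.2 hd) hA']
    with y hy
  exact dimH_le_of_hausdorffMeasure_ne_top (by simp [hy])

theorem LipschitzWith.ae_dimH_inter_preimage_le (hf : LipschitzWith K f) (A : Set X) :
    ∀ᵐ y, dimH (A ∩ f ⁻¹' {y}) ≤ dimH A - 1 := by
  rcases eq_top_or_lt_top (dimH A) with hA | hA
  · simp [hA]
  set a := (dimH A - 1).toNNReal
  have ha : (a : ℝ≥0∞) = dimH A - 1 := coe_toNNReal (tsub_le_self.trans_lt hA).ne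
  have hlt : ∀ n : ℕ+, dimH A < ↑(a + ((n : ℕ) : ℝ≥0)⁻¹) + 1 := fun n =>
    calc dimH A ≤ dimH A - 1 + 1 := le_tsub_add
      _ < ↑(a + ((n : ℕ) : ℝ≥0)⁻¹) + 1 := by
        rw [← ha]
        exact ENNReal.add_lt_add_right one_ne_top
          (coe_lt_coe.2 (lt_add_of_pos_right _ (by positivity)))
  filter_upwards [ae_all_iff.2 fun n => hf.ae_dimH_inter_preimage_le_of_lt (by positivity) (hlt n)]
    with y hy
  refine ENNReal.le_of_forall_pos_le_add fun ε hε _ => ?_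
  obtain ⟨n, hn, hnε⟩ := NNReal.exists_nat_pos_inv_lt hε
  calc dimH (A ∩ f ⁻¹' {y}) ≤ ↑(a + ((n : ℕ) : ℝ≥0)⁻¹) := hy ⟨n, hn⟩
    _ ≤ dimH A - 1 + ε := by
      rw [← ha, ← coe_add]
      exact coe_le_coe.2 (add_le_add_right hnε.le _)

end Dimension

theorem stmt4_general (X : Type*) [MetricSpace X] (x₀ : X) (ε : ℝ≥0∞) :
    (∃ r : ℝ, 0 < r ∧
      dimH (frontier (Metric.ball x₀ r)) ≤ dimH (Set.univ : Set X) - 1 + ε) ∧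
    volume {r : ℝ | 0 < r ∧
      ¬ dimH {x : X | dist x x₀ = r} ≤ dimH (Set.univ : Set X) - 1 + ε} = 0 := by
  have hsphere : ∀ᵐ r : ℝ, dimH {x : X | dist x x₀ = r} ≤ dimH (univ : Set X) - 1 + ε := by
    filter_upwards [(LipschitzWith.dist_left x₀).ae_dimH_inter_preimage_le univ] with r hr
    rw [univ_inter] at hr
    exact le_add_right hr
  refine ⟨?_, measure_mono_null (fun r hr => hr.2) (ae_iff.1 hsphere)⟩
  obtain ⟨r, hr, hdim⟩ := Measure.exists_mem_of_measure_ne_zero_of_ae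
    (by simp : volume (Ioi (0 : ℝ)) ≠ 0) (ae_restrict_of_ae hsphere)
  exact ⟨r, hr, (dimH_mono frontier_ball_subset_sphere).trans hdim⟩

/-- In a metric space of Hausdorff dimension at least `1`, around every point there are
balls of arbitrarily small radius whose boundaries have Hausdorff dimension at most
`dimH X - 1 + ε`; in fact, the set of radii `r ∈ (0,∞)` for which the sphere of radius
`r` fails this bound has Lebesgue measure zero. -/
theorem stmt4 (X : Type*) [MetricSpace X]
    (h : 1 ≤ dimH (Set.univ : Set X)) (x₀ : X) (ε : ℝ≥0∞) (hε : 0 < ε) :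
    (∃ r : ℝ, 0 < r ∧
      dimH (frontier (Metric.ball x₀ r)) ≤ dimH (Set.univ : Set X) - 1 + ε) ∧
    volume {r : ℝ | 0 < r ∧
      ¬ dimH {x : X | dist x x₀ = r} ≤ dimH (Set.univ : Set X) - 1 + ε} = 0 :=
  stmt4_general X x₀ ε
end

section
/- Let X be a separable metric space which is the union of countably many closed subsets X_n. Then dim_tH X = sup_n dim_tH X_n (countable stability of the topological Hausdorff dimension for closed sets). -/
/-!
Let `d` exceed every `dimTH (F n)`. Each `F n` has a countable basis whose frontiers have
Hausdorff dimension at most `d - 1`, so by countable stability of `dimH` the union `A` of all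
these frontiers (pushed into `X`) still has `dimH A ≤ d - 1`. Off `A` the basic sets of `F n`
are clopen, so `Aᶜ` is a countable union of closed zero-dimensional subspaces and hence, by the
sum theorem for dimension zero, any two disjoint closed subsets of `Aᶜ` are separated by a clopen
set. Thickening such a clopen set to an open subset of `X` by complete normality gives a basis
of `X` whose frontiers lie in `A`, whence `dimTH X ≤ d`. The reverse inequality is monotonicity
of `dimTH` under passing to subspaces.
-/

open TopologicalSpace Set ENNReal NNReal MeasureTheory

/-- The topological Hausdorff dimension of a metric space: the infimum of all `d ∈ [0,∞]`
such that the space has a topological basis all of whose members `U` satisfy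
`dimH (frontier U) ≤ d - 1` (with the convention `dimH ∅ = -1`, i.e. for `d < 1` the
condition forces `frontier U = ∅`). -/
noncomputable def dimTH (X : Type*) [EMetricSpace X] : ℝ≥0∞ :=
  ⨅ (d : ℝ≥0∞) (_ : ∃ B : Set (Set X), IsTopologicalBasis B ∧
      ∀ U ∈ B, frontier U = ∅ ∨ dimH (frontier U) + 1 ≤ d), d

open Topology Function

def ZeroDimensional (Y : Type*) [TopologicalSpace Y] : Prop :=
  IsTopologicalBasis {s : Set Y | IsClopen s}

def StronglyZeroDimensional (Y : Type*) [TopologicalSpace Y] : Prop :=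
  ∀ E F : Set Y, IsClosed E → IsClosed F → Disjoint E F →
    ∃ U : Set Y, IsClopen U ∧ E ⊆ U ∧ Disjoint U F

section ZeroDimensional

variable {Y Z : Type*} [TopologicalSpace Y] [TopologicalSpace Z]

theorem TopologicalSpace.IsTopologicalBasis.zeroDimensional_of_isInducing {B : Set (Set Y)}
    (hB : IsTopologicalBasis B) {f : Z → Y} (hf : IsInducing f)
    (hfr : ∀ V ∈ B, Disjoint (frontier V) (range f)) : ZeroDimensional Z := by
  refine (hB.isInducing hf).of_isOpen_of_subset (fun _ hU => hU.isOpen) ?_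
  rintro _ ⟨V, hV, rfl⟩
  have hclosure : f ⁻¹' closure V = f ⁻¹' V := by
    rw [closure_eq_self_union_frontier, preimage_union, preimage_eq_empty (hfr V hV),
      union_empty]
  exact ⟨hclosure ▸ isClosed_closure.preimage hf.continuous,
    (hB.isOpen hV).preimage hf.continuous⟩

theorem isClopen_biUnion_of_disjoint_cover {ι : Type*} {D : ι → Set Y} (hD : ∀ i, IsOpen (D i))
    (hdisj : Pairwise (Disjoint on D)) (hcov : ⋃ i, D i = univ) (S : Set ι) :
    IsClopen (⋃ i ∈ S, D i) := by
  refine isClopen_of_disjoint_cover_open (b := ⋃ i ∈ Sᶜ, D i) ?_ (isOpen_biUnion fun i _ => hD i)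
    (isOpen_biUnion fun i _ => hD i) ?_
  · rw [← biUnion_union, union_compl_self, biUnion_univ, hcov]
  · exact disjoint_iUnion₂_left.2 fun i hi => disjoint_iUnion₂_right.2 fun j hj =>
      hdisj fun hij => hj (hij ▸ hi)

theorem ZeroDimensional.stronglyZeroDimensional [SecondCountableTopology Y]
    (h : ZeroDimensional Y) : StronglyZeroDimensional Y := by
  intro E F hE hF hEF
  obtain ⟨B, hBclopen, hBcount, hB⟩ := h.exists_countable
  have hgood : ∀ y, ∃ W ∈ B, y ∈ W ∧ (Disjoint W F ∨ Disjoint W E) := by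
    intro y
    by_cases hyF : y ∈ F
    · obtain ⟨W, hWB, hyW, hWE⟩ :=
        hB.exists_subset_of_mem_open (disjoint_right.1 hEF hyF) hE.isOpen_compl
      exact ⟨W, hWB, hyW, .inr (subset_compl_iff_disjoint_right.1 hWE)⟩
    · obtain ⟨W, hWB, hyW, hWF⟩ := hB.exists_subset_of_mem_open hyF hF.isOpen_compl
      exact ⟨W, hWB, hyW, .inl (subset_compl_iff_disjoint_right.1 hWF)⟩
  -- `∅` is added so that the family is nonempty and can be enumerated
  obtain ⟨W, hW⟩ := ((hBcount.mono (sep_subset B fun W => Disjoint W F ∨ Disjoint W E)).insert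
    ∅).exists_eq_range (insert_nonempty _ _)
  have hWgood : ∀ n, IsClopen (W n) ∧ (Disjoint (W n) F ∨ Disjoint (W n) E) := fun n => by
    rcases (hW ▸ mem_range_self n : W n ∈ insert ∅ {W ∈ B | Disjoint W F ∨ Disjoint W E})
      with h0 | ⟨hWB, hWd⟩
    · exact ⟨h0 ▸ isClopen_empty, .inl (h0 ▸ empty_disjoint F)⟩
    · exact ⟨hBclopen hWB, hWd⟩
  have hWcov : ⋃ n, disjointed W n = univ := by
    refine iUnion_disjointed.trans (eq_univ_of_forall fun y => ?_)
    obtain ⟨V, hVB, hyV, hVd⟩ := hgood y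
    obtain ⟨n, rfl⟩ : V ∈ range W := hW ▸ mem_insert_of_mem _ ⟨hVB, hVd⟩
    exact mem_iUnion_of_mem n hyV
  have hDclopen : ∀ n, IsClopen (disjointed W n) := fun n =>
    (hWgood n).1.diff (by
      rw [Finset.sup_set_eq_biUnion]; exact isClopen_biUnion_finset fun j _ => (hWgood j).1)
  refine ⟨⋃ n ∈ {n | Disjoint (W n) F}, disjointed W n,
    isClopen_biUnion_of_disjoint_cover (fun n => (hDclopen n).isOpen) (disjoint_disjointed W)
      hWcov _, fun x hx => ?_,
    disjoint_iUnion₂_left.2 fun n hn => hn.mono_left (disjointed_subset W n)⟩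
  obtain ⟨n, hxn⟩ := mem_iUnion.1 (hWcov ▸ mem_univ x)
  exact mem_biUnion ((hWgood n).2.resolve_right
    (not_disjoint_iff.2 ⟨x, disjointed_subset W n hxn, hx⟩)) hxn

theorem StronglyZeroDimensional.exists_isClosed_cover [NormalSpace Y] {C : Set Y}
    (hC : IsClosed C) (h : StronglyZeroDimensional C) {E F : Set Y} (hE : IsClosed E)
    (hF : IsClosed F) (hEF : Disjoint E F) :
    ∃ E' F' : Set Y, IsClosed E' ∧ IsClosed F' ∧ Disjoint E' F' ∧
      E ⊆ interior E' ∧ F ⊆ interior F' ∧ C ⊆ E' ∪ F' := by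
  obtain ⟨K, hK, hEK, hKF⟩ := h (Subtype.val ⁻¹' E) (Subtype.val ⁻¹' F)
    (hE.preimage continuous_subtype_val) (hF.preimage continuous_subtype_val) (hEF.preimage _)
  set E₁ := E ∪ Subtype.val '' K
  set F₁ := F ∪ Subtype.val '' Kᶜ
  have hE₁ : IsClosed E₁ := hE.union (hC.isClosedMap_subtype_val _ hK.isClosed)
  have hF₁ : IsClosed F₁ := hF.union (hC.isClosedMap_subtype_val _ hK.compl.isClosed)
  have hEF₁ : Disjoint E₁ F₁ := by
    refine disjoint_union_left.2 ⟨disjoint_union_right.2 ⟨hEF, ?_⟩,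
      disjoint_union_right.2 ⟨?_, ?_⟩⟩
    · exact disjoint_right.2 fun _ ⟨z, hzK, hzx⟩ hxE => hzK (hEK (hzx ▸ hxE : z.1 ∈ E))
    · exact disjoint_left.2 fun _ ⟨z, hzK, hzx⟩ hxF =>
        disjoint_left.1 hKF hzK (hzx ▸ hxF : z.1 ∈ F)
    · exact (disjoint_image_iff Subtype.val_injective).2 disjoint_compl_right
  have hC₁ : C ⊆ E₁ ∪ F₁ := fun x hx => by
    by_cases hxK : (⟨x, hx⟩ : C) ∈ K
    · exact .inl (.inr ⟨_, hxK, rfl⟩)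
    · exact .inr (.inr ⟨_, hxK, rfl⟩)
  obtain ⟨E', ⟨hE'₁, hE'⟩, F', ⟨hF'₁, hF'⟩, hE'F'⟩ :=
    ((closed_nhdsSet_basis _ hE₁).disjoint_iff (closed_nhdsSet_basis _ hF₁)).1
      (disjoint_nhdsSet_nhdsSet hE₁ hF₁ hEF₁)
  exact ⟨E', F', hE', hF', hE'F',
    subset_union_left.trans (subset_interior_iff_mem_nhdsSet.2 hE'₁),
    subset_union_left.trans (subset_interior_iff_mem_nhdsSet.2 hF'₁),
    hC₁.trans (union_subset_union (subset_of_mem_nhdsSet hE'₁) (subset_of_mem_nhdsSet hF'₁))⟩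

theorem isOpen_iUnion_of_subset_interior_succ {s : ℕ → Set Y}
    (hs : ∀ k, s k ⊆ interior (s (k + 1))) : IsOpen (⋃ k, s k) :=
  isOpen_iff_forall_mem_open.2 fun x hx => by
    obtain ⟨k, hxk⟩ := mem_iUnion.1 hx
    exact ⟨_, interior_subset.trans (subset_iUnion s (k + 1)), isOpen_interior, hs k hxk⟩

theorem StronglyZeroDimensional.of_iUnion_isClosed [NormalSpace Y] {C : ℕ → Set Y}
    (hC : ∀ k, IsClosed (C k)) (hcov : ⋃ k, C k = univ)
    (h : ∀ k, StronglyZeroDimensional (C k)) : StronglyZeroDimensional Y := by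
  intro E F hE hF hEF
  set Sep : Set (Set Y × Set Y) := {p | IsClosed p.1 ∧ IsClosed p.2 ∧ Disjoint p.1 p.2}
  have step : ∀ k, ∀ p ∈ Sep, ∃ q ∈ Sep,
      p.1 ⊆ interior q.1 ∧ p.2 ⊆ interior q.2 ∧ C k ⊆ q.1 ∪ q.2 := fun k p ⟨h₁, h₂, h₁₂⟩ =>
    let ⟨E', F', hE', hF', hd, hEE', hFF', hC'⟩ := (h k).exists_isClosed_cover (hC k) h₁ h₂ h₁₂
    ⟨(E', F'), ⟨hE', hF', hd⟩, hEE', hFF', hC'⟩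
  choose! next hnextSep hnext₁ hnext₂ hnextC using step
  -- `P (k + 1)` enlarges `P k` to a separation that also covers `C k`
  let P : ℕ → Set Y × Set Y := fun k => Nat.rec (E, F) next k
  have hP : ∀ k, P k ∈ Sep := fun k => by
    induction k with
    | zero => exact ⟨hE, hF, hEF⟩
    | succ k ih => exact hnextSep k _ ih
  have hP₁ : ∀ k, (P k).1 ⊆ interior (P (k + 1)).1 := fun k => hnext₁ k _ (hP k)
  have hP₂ : ∀ k, (P k).2 ⊆ interior (P (k + 1)).2 := fun k => hnext₂ k _ (hP k)
  have hmono₁ : Monotone fun k => (P k).1 :=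
    monotone_nat_of_le_succ fun k => (hP₁ k).trans interior_subset
  have hmono₂ : Monotone fun k => (P k).2 :=
    monotone_nat_of_le_succ fun k => (hP₂ k).trans interior_subset
  have hdisj : Disjoint (⋃ k, (P k).1) (⋃ k, (P k).2) :=
    disjoint_iUnion_left.2 fun i => disjoint_iUnion_right.2 fun j =>
      (hP (max i j)).2.2.mono (hmono₁ (le_max_left i j)) (hmono₂ (le_max_right i j))
  have hcover : univ ⊆ (⋃ k, (P k).1) ∪ ⋃ k, (P k).2 := fun x _ => by
    obtain ⟨k, hxk⟩ := mem_iUnion.1 (hcov ▸ mem_univ x)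
    exact (hnextC k _ (hP k) hxk).imp (mem_iUnion_of_mem (k + 1)) (mem_iUnion_of_mem (k + 1))
  exact ⟨_, isClopen_of_disjoint_cover_open hcover (isOpen_iUnion_of_subset_interior_succ hP₁)
    (isOpen_iUnion_of_subset_interior_succ hP₂) hdisj, subset_iUnion (fun k => (P k).1) 0,
    hdisj.mono_right (subset_iUnion (fun k => (P k).2) 0)⟩

theorem disjoint_closure_image_val_compl {s : Set Y} {K : Set s} (hK : IsClosed K) :
    Disjoint (closure (Subtype.val '' K)) (Subtype.val '' Kᶜ) := by
  refine disjoint_right.2 fun _ ⟨z, hzK, hzx⟩ hzc => hzK ?_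
  rw [← hK.closure_eq, IsInducing.subtypeVal.closure_eq_preimage_closure_image, mem_preimage, hzx]
  exact hzc

theorem exists_isTopologicalBasis_frontier_subset [RegularSpace Y] [CompletelyNormalSpace Y]
    {A : Set Y} (h : StronglyZeroDimensional ↥Aᶜ) :
    ∃ B : Set (Set Y), IsTopologicalBasis B ∧ ∀ U ∈ B, frontier U ⊆ A := by
  refine ⟨{U | IsOpen U ∧ frontier U ⊆ A}, isTopologicalBasis_of_isOpen_of_nhds (fun U hU => hU.1)
    fun x O hxO hO => ?_, fun U hU => hU.2⟩
  obtain ⟨T, hTx, hT, hTO⟩ := exists_mem_nhds_isClosed_subset (hO.mem_nhds hxO)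
  obtain ⟨K, hK, hTK, hKO⟩ := h (Subtype.val ⁻¹' T) (Subtype.val ⁻¹' Oᶜ)
    (hT.preimage continuous_subtype_val) (hO.isClosed_compl.preimage continuous_subtype_val)
    ((disjoint_compl_right_iff_subset.2 hTO).preimage _)
  -- `K` and its complement are separated sets of `Y`, so they have disjoint neighbourhoods
  obtain ⟨U', V', hU', hV', hKU', hKV', hUV'⟩ := separatedNhds_iff_disjoint.2 <|
    completely_normal (disjoint_closure_image_val_compl hK.isClosed)
      (by simpa using (disjoint_closure_image_val_compl hK.compl.isClosed).symm)
  set U := U' ∩ O ∪ interior T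
  have hUo : IsOpen U := (hU'.inter hO).union isOpen_interior
  refine ⟨U, ⟨hUo, fun y hy => ?_⟩, .inr (mem_interior_iff_mem_nhds.2 hTx),
    union_subset inter_subset_right (interior_subset.trans hTO)⟩
  rw [hUo.frontier_eq] at hy
  by_contra hyA
  by_cases hyK : (⟨y, hyA⟩ : ↥Aᶜ) ∈ K
  · exact hy.2 (.inl ⟨hKU' ⟨_, hyK, rfl⟩, not_not.1 (disjoint_left.1 hKO hyK)⟩)
  · have hyT : y ∉ T := fun hyT => hyK (hTK hyT)
    have hUV : Disjoint (V' ∩ Tᶜ) U := disjoint_union_right.2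
      ⟨(hUV'.symm.mono inter_subset_left inter_subset_left),
        disjoint_compl_left.mono inter_subset_right interior_subset⟩
    exact disjoint_left.1 (hUV.closure_right (hV'.inter hT.isOpen_compl))
      ⟨hKV' ⟨_, hyK, rfl⟩, hyT⟩ hy.1

theorem stronglyZeroDimensional_compl_of_isTopologicalBasis [SecondCountableTopology Y]
    [CompletelyNormalSpace Y] {F : ℕ → Set Y} (hcl : ∀ n, IsClosed (F n)) (hU : ⋃ n, F n = univ)
    {B : ∀ n, Set (Set (F n))} (hB : ∀ n, IsTopologicalBasis (B n)) {A : Set Y}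
    (hA : ∀ n, ∀ V ∈ B n, Subtype.val '' frontier V ⊆ A) : StronglyZeroDimensional ↥Aᶜ := by
  refine .of_iUnion_isClosed (C := fun n => Subtype.val ⁻¹' F n)
    (fun n => (hcl n).preimage continuous_subtype_val)
    (by rw [← preimage_iUnion, hU, preimage_univ]) fun n => ?_
  refine ZeroDimensional.stronglyZeroDimensional <| (hB n).zeroDimensional_of_isInducing
    (f := fun y => ⟨y.1.1, y.2⟩)
    (IsInducing.subtypeVal.of_comp_iff.1 <|
      show IsInducing (Subtype.val ∘ Subtype.val) from .comp .subtypeVal .subtypeVal)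
    fun V hV => disjoint_left.2 ?_
  rintro _ hz ⟨y, rfl⟩
  exact y.1.2 (hA n V hV (mem_image_of_mem _ hz))

end ZeroDimensional

section Dimension

variable {X : Type*} [EMetricSpace X]

theorem eq_empty_or_dimH_add_one_le_of_subset {s t : Set X} {d : ℝ≥0∞} (hst : s ⊆ t)
    (ht : t = ∅ ∨ dimH t + 1 ≤ d) : s = ∅ ∨ dimH s + 1 ≤ d :=
  ht.imp (fun h : t = ∅ => subset_empty_iff.1 (h ▸ hst)) fun h => le_trans (by gcongr) h

theorem eq_empty_or_dimH_iUnion_add_one_le {ι : Sort*} [Countable ι] {s : ι → Set X}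
    {d : ℝ≥0∞} (hs : ∀ i, s i = ∅ ∨ dimH (s i) + 1 ≤ d) :
    (⋃ i, s i) = ∅ ∨ dimH (⋃ i, s i) + 1 ≤ d := by
  refine (eq_empty_or_nonempty _).imp id fun ⟨x, hx⟩ => ?_
  obtain ⟨j, hxj⟩ := mem_iUnion.1 hx
  -- a nonempty piece forces `1 ≤ d`, which the empty pieces then satisfy too
  have hd : 1 ≤ d := le_add_self.trans ((hs j).resolve_left (nonempty_iff_ne_empty.1 ⟨x, hxj⟩))
  have : Nonempty ι := ⟨j⟩
  rw [dimH_iUnion, ENNReal.iSup_add]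
  exact iSup_le fun i => (hs i).elim (fun h => by rwa [h, dimH_empty, zero_add]) id

theorem Isometry.eq_empty_or_dimH_image_add_one_le_iff {Y : Type*} [EMetricSpace Y] {f : X → Y}
    (hf : Isometry f) (s : Set X) {d : ℝ≥0∞} :
    (f '' s = ∅ ∨ dimH (f '' s) + 1 ≤ d) ↔ (s = ∅ ∨ dimH s + 1 ≤ d) := by
  rw [image_eq_empty, hf.dimH_image]

theorem dimTH_le_of_isTopologicalBasis {B : Set (Set X)} (hB : IsTopologicalBasis B) {d : ℝ≥0∞}
    (h : ∀ U ∈ B, frontier U = ∅ ∨ dimH (frontier U) + 1 ≤ d) : dimTH X ≤ d :=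
  iInf₂_le d ⟨B, hB, h⟩

theorem exists_countable_isTopologicalBasis_of_dimTH_lt [SecondCountableTopology X] {d : ℝ≥0∞}
    (h : dimTH X < d) : ∃ B : Set (Set X), B.Countable ∧ IsTopologicalBasis B ∧
      ∀ U ∈ B, frontier U = ∅ ∨ dimH (frontier U) + 1 ≤ d := by
  obtain ⟨d', ⟨B, hB, hBd'⟩, hd'⟩ : ∃ d', (∃ B : Set (Set X), IsTopologicalBasis B ∧
      ∀ U ∈ B, frontier U = ∅ ∨ dimH (frontier U) + 1 ≤ d') ∧ d' < d := by
    simpa only [dimTH, iInf_lt_iff, exists_prop] using h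
  obtain ⟨B', hB'B, hB'count, hB'⟩ := hB.exists_countable
  exact ⟨B', hB'count, hB', fun U hU => (hBd' U (hB'B hU)).imp_right (·.trans hd'.le)⟩

theorem dimTH_subtype_le (s : Set X) : dimTH s ≤ dimTH X := by
  refine le_iInf₂ fun d ⟨B, hB, hBd⟩ =>
    dimTH_le_of_isTopologicalBasis (hB.isInducing IsInducing.subtypeVal) ?_
  rintro _ ⟨U, hU, rfl⟩
  refine (isometry_subtype_coe.eq_empty_or_dimH_image_add_one_le_iff _).1
    (eq_empty_or_dimH_add_one_le_of_subset ?_ (hBd U hU))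
  exact image_subset_iff.2 (continuous_subtype_val.frontier_preimage_subset U)

end Dimension

theorem dimTH_le_iSup_of_iUnion_isClosed {X : Type*} [MetricSpace X] [SecondCountableTopology X]
    {F : ℕ → Set X} (hcl : ∀ n, IsClosed (F n)) (hU : ⋃ n, F n = univ) :
    dimTH X ≤ ⨆ n, dimTH (F n) := by
  refine le_of_forall_gt_imp_ge_of_dense fun d hd => ?_
  choose B hBcount hB hBd using fun n => exists_countable_isTopologicalBasis_of_dimTH_lt
    ((le_iSup (fun n => dimTH (F n)) n).trans_lt hd)
  set A : Set X := ⋃ n, ⋃ V : B n, Subtype.val '' frontier (V : Set (F n))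
  have hA : ∀ n, ∀ V ∈ B n, Subtype.val '' frontier V ⊆ A := fun n V hV =>
    subset_iUnion_of_subset n (subset_iUnion_of_subset ⟨V, hV⟩ subset_rfl)
  have hAd : A = ∅ ∨ dimH A + 1 ≤ d := eq_empty_or_dimH_iUnion_add_one_le fun n =>
    have := (hBcount n).to_subtype
    eq_empty_or_dimH_iUnion_add_one_le fun V =>
      (isometry_subtype_coe.eq_empty_or_dimH_image_add_one_le_iff _).2 (hBd n V V.2)
  obtain ⟨B₀, hB₀, hB₀A⟩ := exists_isTopologicalBasis_frontier_subset
    (stronglyZeroDimensional_compl_of_isTopologicalBasis hcl hU hB hA)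
  exact dimTH_le_of_isTopologicalBasis hB₀ fun U hU =>
    eq_empty_or_dimH_add_one_le_of_subset (hB₀A U hU) hAd

/-- Countable stability of the topological Hausdorff dimension for closed sets. -/
theorem stmt11 (X : Type*) [MetricSpace X] [SeparableSpace X]
    (F : ℕ → Set X) (hcl : ∀ n, IsClosed (F n)) (hU : (⋃ n, F n) = Set.univ) :
    dimTH X = ⨆ n, dimTH (F n) :=
  le_antisymm (dimTH_le_iSup_of_iUnion_isClosed hcl hU) (iSup_le fun n => dimTH_subtype_le (F n))
end
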